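/- If the Nevanlinna class N on the unit disk were invariant under multiplication by the identity function z (i.e., z·N' ⊆ N' where N' = {f' : f ∈ N}), then N ⊆ N'. Consequently, since there exists f ∈ N with no antiderivative in N, the function z is not a multiplier of N'. -/

import Mathlib

open MeasureTheory Set Filter Finset

noncomputable section

/-- The open unit disk in ℂ. -/
def UD : Set ℂ := Metric.ball 0 1

/-- Holomorphic on the unit disk. -/
def HolOn (f : ℂ → ℂ) : Prop := DifferentiableOn ℂ f UD

/-- Bounded holomorphic functions on the disk (H^∞). -/
def MemHinf (f : ℂ → ℂ) : Prop := HolOn f ∧ ∃ M : ℝ, ∀ z ∈ UD, ‖f z‖ ≤ M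

/-- The Nevanlinna class: quotients u/v with u, v ∈ H^∞ and v zero-free on the disk. -/
def MemNev (f : ℂ → ℂ) : Prop :=
  ∃ u v : ℂ → ℂ, MemHinf u ∧ MemHinf v ∧ (∀ z ∈ UD, v z ≠ 0) ∧ ∀ z ∈ UD, f z = u z / v z

/-- Carleson measure on the unit disk (via Carleson disks). -/
def IsCarleson (μ : Measure ℂ) : Prop :=
  ∃ C : ℝ, ∀ ζ : ℂ, ‖ζ‖ = 1 → ∀ h : ℝ, 0 < h →
    μ (Metric.closedBall ζ h ∩ UD) ≤ ENNReal.ofReal (C * h)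

/-- The measure |F(z)|² (1-|z|)^{2n-1} dA(z) on the unit disk. -/
def wtMeasure (F : ℂ → ℂ) (n : ℕ) : Measure ℂ :=
  (volume.restrict UD).withDensity fun z => ENNReal.ofReal (‖F z‖ ^ 2 * (1 - ‖z‖) ^ (2 * n - 1))

/-- BMOA via the Carleson-measure characterization: w holomorphic on the disk and
|w'(z)|²(1-|z|)dA(z) a Carleson measure. -/
def MemBMOA (w : ℂ → ℂ) : Prop := HolOn w ∧ IsCarleson (wtMeasure (deriv w) 1)

/-- Outer function: zero-free on the disk and the circular means of log|v| tend to log|v(0)|. -/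
def Outer (v : ℂ → ℂ) : Prop :=
  (∀ z ∈ UD, v z ≠ 0) ∧
  Filter.Tendsto
    (fun r : ℝ => (2 * Real.pi)⁻¹ *
      ∫ θ in (0:ℝ)..(2 * Real.pi), Real.log ‖v (↑r * Complex.exp (↑θ * Complex.I))‖)
    (nhdsWithin 1 (Set.Iio 1)) (nhds (Real.log ‖v 0‖))

/-- The Smirnov class: quotients u/v with u, v ∈ H^∞ and v outer. -/
def MemSmirnov (f : ℂ → ℂ) : Prop :=
  ∃ u v : ℂ → ℂ, MemHinf u ∧ MemHinf v ∧ Outer v ∧ ∀ z ∈ UD, f z = u z / v z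

/-- f belongs to the class X, viewed as functions on the unit disk: some member of X
agrees with f on the disk. -/
def MemOn (X : Set (ℂ → ℂ)) (f : ℂ → ℂ) : Prop := ∃ F ∈ X, ∀ z ∈ UD, F z = f z

lemma isOpen_UD : IsOpen UD := Metric.isOpen_ball

lemma memHinf_id : MemHinf fun z => z := by
  refine ⟨differentiableOn_id, 1, fun z hz => ?_⟩
  simpa [UD] using (Metric.mem_ball.mp hz).le

lemma MemHinf.mul {u v : ℂ → ℂ} (hu : MemHinf u) (hv : MemHinf v) :
    MemHinf fun z => u z * v z := by
  obtain ⟨hu, M, hM⟩ := hu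
  obtain ⟨hv, K, hK⟩ := hv
  refine ⟨hu.mul hv, M * K, fun z hz => ?_⟩
  rw [norm_mul]
  exact mul_le_mul (hM z hz) (hK z hz) (norm_nonneg _) ((norm_nonneg _).trans (hM z hz))

lemma MemHinf.sub {u v : ℂ → ℂ} (hu : MemHinf u) (hv : MemHinf v) :
    MemHinf fun z => u z - v z := by
  obtain ⟨hu, M, hM⟩ := hu
  obtain ⟨hv, K, hK⟩ := hv
  exact ⟨hu.sub hv, M + K, fun z hz =>
    (norm_sub_le _ _).trans (add_le_add (hM z hz) (hK z hz))⟩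

lemma MemHinf.memNev {u : ℂ → ℂ} (hu : MemHinf u) : MemNev u :=
  ⟨u, fun _ => 1, hu, ⟨differentiableOn_const 1, 1, by simp⟩, by simp, by simp⟩

lemma MemNev.mul {f g : ℂ → ℂ} (hf : MemNev f) (hg : MemNev g) :
    MemNev fun z => f z * g z := by
  obtain ⟨u₁, v₁, hu₁, hv₁, hv₁0, hf⟩ := hf
  obtain ⟨u₂, v₂, hu₂, hv₂, hv₂0, hg⟩ := hg
  refine ⟨_, _, hu₁.mul hu₂, hv₁.mul hv₂, fun z hz => mul_ne_zero (hv₁0 z hz) (hv₂0 z hz),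
    fun z hz => ?_⟩
  beta_reduce
  rw [hf z hz, hg z hz, div_mul_div_comm]

lemma MemNev.sub {f g : ℂ → ℂ} (hf : MemNev f) (hg : MemNev g) :
    MemNev fun z => f z - g z := by
  obtain ⟨u₁, v₁, hu₁, hv₁, hv₁0, hf⟩ := hf
  obtain ⟨u₂, v₂, hu₂, hv₂, hv₂0, hg⟩ := hg
  refine ⟨_, _, (hu₁.mul hv₂).sub (hv₁.mul hu₂), hv₁.mul hv₂,
    fun z hz => mul_ne_zero (hv₁0 z hz) (hv₂0 z hz), fun z hz => ?_⟩
  beta_reduce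
  rw [hf z hz, hg z hz, div_sub_div _ _ (hv₁0 z hz) (hv₂0 z hz)]

lemma MemNev.differentiableAt {f : ℂ → ℂ} (hf : MemNev f) {z : ℂ} (hz : z ∈ UD) :
    DifferentiableAt ℂ f z := by
  obtain ⟨u, v, ⟨hu, -⟩, ⟨hv, -⟩, hv0, hf⟩ := hf
  have hquot : DifferentiableAt ℂ (fun w => u w / v w) z :=
    (hu.div hv hv0).differentiableAt (isOpen_UD.mem_nhds hz)
  exact hquot.congr_of_eventuallyEq (Filter.eventuallyEq_of_mem (isOpen_UD.mem_nhds hz) hf)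

/-- `g ∈ N' = {F' : F ∈ N}`, with the derivative compared on the disk only. -/
def MemNevDeriv (g : ℂ → ℂ) : Prop := ∃ G : ℂ → ℂ, MemNev G ∧ ∀ z ∈ UD, deriv G z = g z

/-- `g = (z g)' - z g'`, and `N` is an algebra containing `z`. -/
lemma MemNev.memNevDeriv_of_memNevDeriv_id_mul_deriv {g : ℂ → ℂ} (hg : MemNev g)
    (hzg' : MemNevDeriv fun z => z * deriv g z) : MemNevDeriv g := by
  obtain ⟨F, hF, hF'⟩ := hzg'
  refine ⟨fun z => z * g z - F z, (memHinf_id.memNev.mul hg).sub hF, fun z hz => ?_⟩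
  have hzg : HasDerivAt (fun w => w * g w) (1 * g z + z * deriv g z) z :=
    (hasDerivAt_id z).mul (hg.differentiableAt hz).hasDerivAt
  rw [(hzg.fun_sub (hF.differentiableAt hz).hasDerivAt).deriv, hF' z hz]
  ring

/-- if z·N' ⊆ N' then N ⊆ N'; consequently, given Hayman's example,
z is not a multiplier of N'. -/
theorem stmt7 :
    ((∀ f : ℂ → ℂ, MemNev f →
        ∃ F : ℂ → ℂ, MemNev F ∧ ∀ z ∈ UD, deriv F z = z * deriv f z) →
      ∀ g : ℂ → ℂ, MemNev g →
        ∃ G : ℂ → ℂ, MemNev G ∧ ∀ z ∈ UD, deriv G z = g z) ∧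
    ((∃ f : ℂ → ℂ, MemNev f ∧
        ¬ ∃ F : ℂ → ℂ, MemNev F ∧ ∀ z ∈ UD, deriv F z = f z) →
      ¬ ∀ f : ℂ → ℂ, MemNev f →
        ∃ F : ℂ → ℂ, MemNev F ∧ ∀ z ∈ UD, deriv F z = z * deriv f z) := by
  have nev_subset_nevDeriv (H : ∀ f : ℂ → ℂ, MemNev f → MemNevDeriv fun z => z * deriv f z)
      (g : ℂ → ℂ) (hg : MemNev g) : MemNevDeriv g :=
    hg.memNevDeriv_of_memNevDeriv_id_mul_deriv (H g hg)
  refine ⟨nev_subset_nevDeriv, ?_⟩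
  rintro ⟨f, hf, hf_no_antideriv⟩ H
  exact hf_no_antideriv (nev_subset_nevDeriv H f hf)
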